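/- arXiv:1908.07854 — 2 statements merged into one kernel-verified Lean document; each statement's English description precedes it below -/
import Mathlib

section
/- Let n ≥ 4 be an even integer and Λ = Cay(D_{2n}, Ψ) with Ψ = {b, ab, ..., a^{n-1}b} ∪ {a^{n/2}}. The automorphism group of Λ equals the automorphism group of its complement, and is isomorphic to (Z_2 wr Sym(n/2)) wr Sym(2), i.e., the wreath product of the automorphism group of the cocktail party graph CP(n/2) with Sym(2). -/
/-- The Cayley graph of a group with connection set `S`. -/
def cayley {G : Type*} [Group G] (S : Set G) : SimpleGraph G :=
  SimpleGraph.fromRel (fun x y => x⁻¹ * y ∈ S)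

/-- The connection set `Ψ = {b, ab, …, a^{n-1}b} ∪ {a^{n/2}}` in the dihedral group. -/
def Psi (n : ℕ) : Set (DihedralGroup n) :=
  {x | ∃ i : ZMod n, x = DihedralGroup.sr i} ∪ {DihedralGroup.r ((n / 2 : ℕ) : ZMod n)}
/-- The action of a permutation of `Fin m` on `Fin m → A` by permuting coordinates. -/
def permMulAut (m : ℕ) (A : Type*) [Group A] : Equiv.Perm (Fin m) →* MulAut (Fin m → A) where
  toFun σ := MulEquiv.arrowCongr σ (MulEquiv.refl A)
  map_one' := by ext f i; rfl
  map_mul' := by intro σ τ; ext f i; rfl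

/-- The wreath product `A wr Sym(m)` of a group `A` with the symmetric group on `m` points. -/
def Wr (A : Type*) [Group A] (m : ℕ) : Type _ :=
  SemidirectProduct (Fin m → A) (Equiv.Perm (Fin m)) (permMulAut m A)

instance (A : Type*) [Group A] (m : ℕ) : Group (Wr A m) :=
  inferInstanceAs (Group (SemidirectProduct _ _ (permMulAut m A)))

/-!
Every reflection lies in `Ψ`, so `Λ` joins every rotation to every reflection, and inside each
coset of `⟨a⟩` the only edges are `x ~ x a^{n/2}`, a perfect matching. Hence the complement of `Λ`
is two disjoint copies of the cocktail party graph `CP(n/2)`, the complement of a perfect matching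
`(n/2) K₂`. Complementation does not change automorphisms, and an automorphism of `k` disjoint
copies of a connected graph `G` permutes the copies, so their automorphism group is
`Aut G wr Sym(k)`. Applying this to `2 CP(n/2)` and to `(n/2) K₂`, with `Aut K₂ = Z₂`, gives
`(Z₂ wr Sym(n/2)) wr Sym(2)`.
-/

namespace Wr

variable {A B : Type*} [Group A] [Group B] {k : ℕ}

def mk (f : Fin k → A) (σ : Equiv.Perm (Fin k)) : Wr A k :=
  SemidirectProduct.mk f σ

def left (u : Wr A k) : Fin k → A :=
  SemidirectProduct.left u

def right (u : Wr A k) : Equiv.Perm (Fin k) :=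
  SemidirectProduct.right u

@[simp] lemma left_mk (f : Fin k → A) (σ : Equiv.Perm (Fin k)) : (mk f σ).left = f := rfl

@[simp] lemma right_mk (f : Fin k → A) (σ : Equiv.Perm (Fin k)) : (mk f σ).right = σ := rfl

@[simp] lemma left_one : (1 : Wr A k).left = 1 := rfl

lemma left_mul (u v : Wr A k) (i : Fin k) :
    (u * v).left i = u.left i * v.left (u.right⁻¹ i) := rfl

@[ext] lemma ext {u v : Wr A k} (hl : u.left = v.left) (hr : u.right = v.right) : u = v :=
  SemidirectProduct.ext hl hr

def congr (e : A ≃* B) : Wr A k ≃* Wr B k :=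
  SemidirectProduct.congr (MulEquiv.piCongrRight fun _ => e) (MulEquiv.refl _)
    fun _ => MulEquiv.ext fun _ => rfl

variable {X : Type*} [MulAction A X]

/-- The imprimitive action of `A wr Sym(k)` on `k` blocks `{i} × X`. -/
instance : MulAction (Wr A k) (Fin k × X) where
  smul u p := (u.right p.1, u.left (u.right p.1) • p.2)
  one_smul p := Prod.ext rfl (one_smul A p.2)
  mul_smul u v p := Prod.ext rfl <| by
    change (u * v).left (u.right (v.right p.1)) • p.2 =
      u.left (u.right (v.right p.1)) • v.left (v.right p.1) • p.2
    rw [left_mul, Equiv.Perm.inv_def, Equiv.symm_apply_apply, mul_smul]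

lemma smul_def (u : Wr A k) (p : Fin k × X) :
    u • p = (u.right p.1, u.left (u.right p.1) • p.2) := rfl

end Wr

namespace SimpleGraph

variable {V W X ι : Type*}

theorem forall_adj_iff_forall_compl_adj {G : SimpleGraph V} {H : SimpleGraph W} (e : V ≃ W) :
    (∀ u v, H.Adj (e u) (e v) ↔ G.Adj u v) ↔ (∀ u v, Hᶜ.Adj (e u) (e v) ↔ Gᶜ.Adj u v) := by
  have key : ∀ {G : SimpleGraph V} {H : SimpleGraph W},
      (∀ u v, H.Adj (e u) (e v) ↔ G.Adj u v) → ∀ u v, Hᶜ.Adj (e u) (e v) ↔ Gᶜ.Adj u v :=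
    fun h u v => by simp only [compl_adj, h, e.injective.ne_iff]
  exact ⟨key, fun h => by simpa only [compl_compl] using key h⟩

def Iso.compl {G : SimpleGraph V} {H : SimpleGraph W} (e : G ≃g H) : Gᶜ ≃g Hᶜ :=
  ⟨e.toEquiv, (forall_adj_iff_forall_compl_adj e.toEquiv).mp (fun _ _ => e.map_rel_iff) _ _⟩

def Iso.autCongr {G : SimpleGraph V} {H : SimpleGraph W} (e : G ≃g H) :
    (G ≃g G) ≃* (H ≃g H) where
  toFun φ := (e.symm.trans φ).trans e
  invFun ψ := (e.trans ψ).trans e.symm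
  left_inv φ := RelIso.ext fun _ => by simp
  right_inv ψ := RelIso.ext fun _ => by simp
  map_mul' φ ψ := RelIso.ext fun _ => by simp [RelIso.mul_apply]

def autComplEquiv (G : SimpleGraph V) : (Gᶜ ≃g Gᶜ) ≃* (G ≃g G) where
  toFun φ := ⟨φ.toEquiv, (forall_adj_iff_forall_compl_adj φ.toEquiv).mpr
    (fun _ _ => φ.map_rel_iff) _ _⟩
  invFun := Iso.compl
  left_inv _ := rfl
  right_inv _ := rfl
  map_mul' _ _ := rfl

def autTopEquivPerm (V : Type*) : ((⊤ : SimpleGraph V) ≃g (⊤ : SimpleGraph V)) ≃* Equiv.Perm V where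
  toFun := RelIso.toEquiv
  invFun := Iso.completeGraph
  left_inv _ := rfl
  right_inv _ := rfl
  map_mul' _ _ := rfl

/-- The disjoint union of copies of `G` indexed by `ι`. -/
abbrev copies (ι : Type*) (G : SimpleGraph X) : SimpleGraph (ι × X) := (⊥ : SimpleGraph ι) □ G

lemma copies_adj {G : SimpleGraph X} {a b : ι × X} :
    (copies ι G).Adj a b ↔ a.1 = b.1 ∧ G.Adj a.2 b.2 := by
  simp [boxProd_adj, and_comm]

lemma fst_eq_of_copies_reachable {G : SimpleGraph X} {a b : ι × X}
    (h : (copies ι G).Reachable a b) : a.1 = b.1 :=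
  reachable_bot.mp (reachable_boxProd.mp h).1

lemma copies_reachable_iff {G : SimpleGraph X} (hG : G.Preconnected) {a b : ι × X} :
    (copies ι G).Reachable a b ↔ a.1 = b.1 :=
  ⟨fst_eq_of_copies_reachable, fun h => reachable_boxProd.mpr ⟨reachable_bot.mpr h, hG _ _⟩⟩

lemma compl_copies_compl_adj {G : SimpleGraph X} {a b : ι × X} :
    (copies ι Gᶜ)ᶜ.Adj a b ↔ a.1 ≠ b.1 ∨ G.Adj a.2 b.2 := by
  obtain ⟨i, x⟩ := a
  obtain ⟨j, y⟩ := b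
  by_cases h : i = j
  · subst h
    simp only [compl_adj, copies_adj, ne_eq, Prod.mk.injEq, true_and, not_true, false_or]
    exact ⟨fun h => by tauto, fun h => ⟨h.ne, fun h' => h'.2 h⟩⟩
  · simp [compl_adj, h]

lemma connected_compl_copies [Nontrivial ι] [Nonempty X] (G : SimpleGraph X) :
    (copies ι G)ᶜ.Connected := by
  refine (connected_or_connected_compl _).resolve_left fun h => ?_
  obtain ⟨i, j, hij⟩ := exists_pair_ne ι
  obtain ⟨x⟩ := ‹Nonempty X›
  exact hij (fst_eq_of_copies_reachable (h.preconnected (i, x) (j, x)))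

variable {k : ℕ}

def wrToAutCopies (G : SimpleGraph X) :
    Wr (G ≃g G) k →* (copies (Fin k) G ≃g copies (Fin k) G) where
  toFun u := ⟨MulAction.toPerm u, fun {a b} => by
    simp only [MulAction.toPerm_apply, Wr.smul_def, copies_adj, RelIso.smul_def,
      EmbeddingLike.apply_eq_iff_eq]
    exact and_congr_right fun h => by rw [h]; exact RelIso.map_rel_iff _⟩
  map_one' := RelIso.ext fun p => one_smul (Wr (G ≃g G) k) p
  map_mul' u v := RelIso.ext fun p => mul_smul u v p

lemma wrToAutCopies_apply (G : SimpleGraph X) (u : Wr (G ≃g G) k) (p : Fin k × X) :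
    wrToAutCopies G u p = u • p := rfl

lemma wrToAutCopies_injective (G : SimpleGraph X) [Nonempty X] :
    Function.Injective (wrToAutCopies G (k := k)) := by
  rw [injective_iff_map_eq_one]
  intro u hu
  have hfix : ∀ p : Fin k × X, u • p = p := fun p => congrArg (· p) hu
  obtain ⟨x⟩ := ‹Nonempty X›
  have hright : u.right = 1 := Equiv.ext fun i => congrArg Prod.fst (hfix (i, x))
  refine Wr.ext (funext fun i => RelIso.ext fun y => ?_) hright
  simpa [Wr.smul_def, hright] using congrArg Prod.snd (hfix (i, y))

variable {G : SimpleGraph X}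

lemma fst_apply_eq_iff (hG : G.Preconnected) (φ : copies (Fin k) G ≃g copies (Fin k) G)
    (a b : Fin k × X) : (φ a).1 = (φ b).1 ↔ a.1 = b.1 := by
  rw [← copies_reachable_iff hG, ← copies_reachable_iff hG, Iso.reachable_iff]

noncomputable def blockPerm (hG : G.Connected) (φ : copies (Fin k) G ≃g copies (Fin k) G) :
    Equiv.Perm (Fin k) :=
  Equiv.ofBijective (fun i => (φ (i, hG.nonempty.some)).1) <|
    Finite.injective_iff_bijective.mp fun _ _ h => (fst_apply_eq_iff hG.preconnected φ _ _).mp h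

lemma fst_apply (hG : G.Connected) (φ : copies (Fin k) G ≃g copies (Fin k) G)
    (a : Fin k × X) : (φ a).1 = blockPerm hG φ a.1 :=
  (fst_apply_eq_iff hG.preconnected φ _ _).mpr rfl

noncomputable def blockIso (hG : G.Connected) (φ : copies (Fin k) G ≃g copies (Fin k) G)
    (i : Fin k) : G ≃g G where
  toFun x := (φ (i, x)).2
  invFun y := (φ.symm (blockPerm hG φ i, y)).2
  left_inv x := by
    have : (blockPerm hG φ i, (φ (i, x)).2) = φ (i, x) := Prod.ext (fst_apply hG φ (i, x)).symm rfl
    simp [this]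
  right_inv y := by
    have hfst : (φ.symm (blockPerm hG φ i, y)).1 = i :=
      (blockPerm hG φ).injective (by rw [← fst_apply, RelIso.apply_symm_apply])
    have : (i, (φ.symm (blockPerm hG φ i, y)).2) = φ.symm (blockPerm hG φ i, y) :=
      Prod.ext hfst.symm rfl
    simp [this]
  map_rel_iff' {x y} := by
    simpa [copies_adj, fst_apply hG φ] using φ.map_rel_iff (a := (i, x)) (b := (i, y))

lemma wrToAutCopies_surjective (hG : G.Connected) :
    Function.Surjective (wrToAutCopies G (k := k)) := fun φ =>
  ⟨Wr.mk (fun j => blockIso hG φ ((blockPerm hG φ).symm j)) (blockPerm hG φ),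
    RelIso.ext fun ⟨i, x⟩ => Prod.ext (fst_apply hG φ (i, x)).symm <| by
      simp [wrToAutCopies_apply, Wr.smul_def, blockIso]⟩

noncomputable def autCopiesEquivWr (hG : G.Connected) :
    (copies (Fin k) G ≃g copies (Fin k) G) ≃* Wr (G ≃g G) k :=
  haveI := hG.nonempty
  (MulEquiv.ofBijective (wrToAutCopies G)
    ⟨wrToAutCopies_injective G, wrToAutCopies_surjective hG⟩).symm

end SimpleGraph

theorem cayley_adj_iff {G : Type*} [Group G] {S : Set G} (hS : ∀ s ∈ S, s⁻¹ ∈ S) (h1 : 1 ∉ S)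
    {x y : G} : (cayley S).Adj x y ↔ x⁻¹ * y ∈ S := by
  simp only [cayley, SimpleGraph.fromRel_adj]
  refine ⟨fun ⟨_, h⟩ => h.elim id fun h => by simpa using hS _ h, fun h => ⟨?_, Or.inl h⟩⟩
  rintro rfl
  exact h1 (by simpa using h)

noncomputable def permZModTwoEquiv : Equiv.Perm (ZMod 2) ≃* Multiplicative (ZMod 2) :=
  (MulEquiv.ofBijective (MulAction.toPermHom (Multiplicative (ZMod 2)) (ZMod 2)) (by decide)).symm

namespace DihedralGroup

variable {m : ℕ}

lemma r_mem_Psi_iff (a : ZMod (m + m)) : r a ∈ Psi (m + m) ↔ a = m := by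
  simp [Psi, show (m + m) / 2 = m by omega]

lemma sr_mem_Psi {n : ℕ} (a : ZMod n) : sr a ∈ Psi n :=
  Or.inl ⟨a, rfl⟩

lemma inv_mem_Psi {s : DihedralGroup (m + m)} (hs : s ∈ Psi (m + m)) : s⁻¹ ∈ Psi (m + m) := by
  rcases s with a | a
  · rw [r_mem_Psi_iff] at hs
    rw [inv_r, r_mem_Psi_iff, hs, neg_eq_iff_add_eq_zero]
    exact_mod_cast ZMod.natCast_self (m + m)
  · rwa [inv_sr]

lemma one_notMem_Psi [NeZero m] : 1 ∉ Psi (m + m) := by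
  rw [one_def, r_mem_Psi_iff, eq_comm, ZMod.natCast_eq_zero_iff]
  exact fun h => NeZero.ne m (by have := Nat.le_of_dvd (Nat.pos_of_neZero m) h; omega)

lemma cayley_Psi_adj [NeZero m] {x y : DihedralGroup (m + m)} :
    (cayley (Psi (m + m))).Adj x y ↔ x⁻¹ * y ∈ Psi (m + m) :=
  cayley_adj_iff (fun _ => inv_mem_Psi) one_notMem_Psi

end DihedralGroup

def pairToZMod (m : ℕ) (x : Fin m × ZMod 2) : ZMod (m + m) :=
  ((x.1.val + m * x.2.val : ℕ) : ZMod (m + m))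

lemma pairToZMod_add_one (m : ℕ) (p : Fin m) (s : ZMod 2) :
    pairToZMod m (p, s + 1) = pairToZMod m (p, s) + m := by
  rcases (by decide : ∀ s : ZMod 2, s = 0 ∨ s = 1) s with rfl | rfl
  · simp only [pairToZMod, zero_add, ZMod.val_zero, ZMod.val_one]
    push_cast
    ring
  · have h : ((m + m : ℕ) : ZMod (m + m)) = 0 := ZMod.natCast_self _
    simp only [pairToZMod, show (1 + 1 : ZMod 2) = 0 by decide, ZMod.val_zero, ZMod.val_one]
    push_cast at h ⊢
    linear_combination -h

lemma pairToZMod_injective (m : ℕ) [NeZero m] : Function.Injective (pairToZMod m) := by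
  have hval (x : Fin m × ZMod 2) : (pairToZMod m x).val = x.1.val + m * x.2.val := by
    have := x.1.2
    have : x.2.val < 2 := ZMod.val_lt _
    exact ZMod.val_cast_of_lt (by nlinarith)
  intro x y h
  have h := congrArg ZMod.val h
  rw [hval, hval] at h
  have hm := Nat.pos_of_neZero m
  have h1 : x.1.val = y.1.val := by
    simpa [Nat.add_mul_mod_self_left, Nat.mod_eq_of_lt] using congrArg (· % m) h
  have h2 : x.2.val = y.2.val := by
    simpa [Nat.add_mul_div_left _ _ hm, Nat.div_eq_of_lt] using congrArg (· / m) h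
  exact Prod.ext (Fin.ext h1) (ZMod.val_injective _ h2)

lemma pairToZMod_eq_add_iff (m : ℕ) [NeZero m] {x y : Fin m × ZMod 2} :
    pairToZMod m y = pairToZMod m x + m ↔ x.1 = y.1 ∧ x.2 ≠ y.2 := by
  have hZ2 : ∀ s t : ZMod 2, t = s + 1 ↔ s ≠ t := by decide
  rw [← pairToZMod_add_one, (pairToZMod_injective m).eq_iff, Prod.ext_iff, hZ2, eq_comm]

noncomputable def pairEquivZMod (m : ℕ) [NeZero m] : Fin m × ZMod 2 ≃ ZMod (m + m) :=
  Equiv.ofBijective (pairToZMod m) <| (Fintype.bijective_iff_injective_and_card _).mpr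
    ⟨pairToZMod_injective m, by simp [mul_two]⟩

open SimpleGraph DihedralGroup

/-- The cocktail party graph `CP(m)`. -/
abbrev cocktailParty (m : ℕ) : SimpleGraph (Fin m × ZMod 2) :=
  (copies (Fin m) ⊤)ᶜ

noncomputable def autCocktailPartyEquiv (m : ℕ) :
    (cocktailParty m ≃g cocktailParty m) ≃* Wr (Multiplicative (ZMod 2)) m :=
  (autComplEquiv _).trans <| (autCopiesEquivWr connected_top).trans <|
    Wr.congr <| (autTopEquivPerm _).trans permZModTwoEquiv

/-- Block `0` holds the rotations, block `1` the reflections. -/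
noncomputable def dihedralEquiv (m : ℕ) [NeZero m] :
    Fin 2 × (Fin m × ZMod 2) ≃ DihedralGroup (m + m) :=
  ((finTwoEquiv.prodCongr (pairEquivZMod m)).trans (Equiv.boolProdEquivSum _)).trans
    equivSum.symm

noncomputable def cayleyPsiIso (m : ℕ) [NeZero m] :
    (copies (Fin 2) (cocktailParty m))ᶜ ≃g cayley (Psi (m + m)) where
  toEquiv := dihedralEquiv m
  map_rel_iff' {a b} := by
    obtain ⟨c, x⟩ := a
    obtain ⟨d, y⟩ := b
    rw [compl_copies_compl_adj, cayley_Psi_adj]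
    fin_cases c <;> fin_cases d <;>
      simp [dihedralEquiv, pairEquivZMod, Equiv.boolProdEquivSum, finTwoEquiv, r_mem_Psi_iff,
        sr_mem_Psi, inv_r, inv_sr, r_mul_r, r_mul_sr, sr_mul_r, sr_mul_sr, neg_add_eq_iff_eq_add,
        sub_eq_iff_eq_add', pairToZMod_eq_add_iff, and_comm]

theorem cayley_aut_group (n : ℕ) (hn : 4 ≤ n) (hev : Even n) :
    (∀ e : DihedralGroup n ≃ DihedralGroup n,
      (∀ u v, (cayley (Psi n)).Adj (e u) (e v) ↔ (cayley (Psi n)).Adj u v) ↔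
      (∀ u v, (cayley (Psi n))ᶜ.Adj (e u) (e v) ↔ (cayley (Psi n))ᶜ.Adj u v)) ∧
    Nonempty ((cayley (Psi n) ≃g cayley (Psi n)) ≃*
      Wr (Wr (Multiplicative (ZMod 2)) (n / 2)) 2) := by
  refine ⟨forall_adj_iff_forall_compl_adj, ?_⟩
  obtain ⟨m, rfl⟩ := hev
  have : NeZero m := ⟨by omega⟩
  have : Nontrivial (Fin m) := Fin.nontrivial_iff_two_le.mpr (by omega)
  rw [show (m + m) / 2 = m by omega]
  exact ⟨(cayleyPsiIso m).symm.autCongr.trans <| (autComplEquiv _).trans <|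
    (autCopiesEquivWr (connected_compl_copies _)).trans (Wr.congr (autCocktailPartyEquiv m))⟩
end

section
/- Let n ≥ 4 be an even integer and Λ = Cay(D_{2n}, Ψ) with Ψ = {b, ab, ..., a^{n-1}b} ∪ {a^{n/2}}. The set R = {a, a^2, ..., a^{n/2}} ∪ {ab, a^2b, ..., a^{n/2}b} is a doubly resolving set of Λ. -/
/-- `S` is a doubly resolving set of `G`. -/
def IsDoublyResolvingSet {V : Type*} (G : SimpleGraph V) (S : Set V) : Prop :=
  ∀ u v : V, u ≠ v → ∃ x ∈ S, ∃ y ∈ S,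
    (G.dist u x : ℤ) - (G.dist u y : ℤ) ≠ (G.dist v x : ℤ) - (G.dist v y : ℤ)

namespace SimpleGraph

variable {V W : Type*} {G : SimpleGraph V} {H : SimpleGraph W}

theorem edist_map_le (f : G →g H) (u v : V) : H.edist (f u) (f v) ≤ G.edist u v :=
  le_iInf fun w => (edist_le (w.map f)).trans_eq (by rw [Walk.length_map])

theorem Iso.edist_apply (e : G ≃g H) (u v : V) : H.edist (e u) (e v) = G.edist u v := by
  refine le_antisymm (edist_map_le e.toHom u v) ?_
  simpa using edist_map_le e.symm.toHom (e u) (e v)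

theorem Iso.dist_apply (e : G ≃g H) (u v : V) : H.dist (e u) (e v) = G.dist u v := by
  rw [dist, dist, e.edist_apply]

theorem dist_eq_two_of_adj_of_adj {u v w : V} (hne : u ≠ v) (hnadj : ¬G.Adj u v)
    (huw : G.Adj u w) (hwv : G.Adj w v) : G.dist u v = 2 := by
  have h : G.edist u v = 2 := edist_eq_two_iff.2 ⟨hne, hnadj, w, huw, hwv.symm⟩
  rw [dist, h]
  rfl

def DoublyResolves (G : SimpleGraph V) (x y u v : V) : Prop :=
  (G.dist u x : ℤ) - G.dist u y ≠ (G.dist v x : ℤ) - G.dist v y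

theorem DoublyResolves.symm {x y u v : V} (h : G.DoublyResolves x y u v) :
    G.DoublyResolves x y v u :=
  Ne.symm h

end SimpleGraph

section Cayley

variable {G : Type*} [Group G] (S : Set G)

theorem cayley_adj_one {g : G} : (cayley S).Adj 1 g ↔ 1 ≠ g ∧ (g ∈ S ∨ g⁻¹ ∈ S) := by
  simp [cayley, SimpleGraph.fromRel_adj]

def cayleyMulLeft (g : G) : cayley S ≃g cayley S where
  toEquiv := Equiv.mulLeft g
  map_rel_iff' {x y} := by
    simp [cayley, SimpleGraph.fromRel_adj, mul_assoc]

theorem cayley_dist_eq_dist_one (x y : G) :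
    (cayley S).dist x y = (cayley S).dist 1 (x⁻¹ * y) := by
  simpa [cayleyMulLeft] using ((cayleyMulLeft S x⁻¹).dist_apply x y).symm

end Cayley

namespace ZMod

variable {n : ℕ}

theorem half_add_half (hev : Even n) :
    ((n / 2 : ℕ) : ZMod n) + ((n / 2 : ℕ) : ZMod n) = 0 := by
  rw [← Nat.cast_add, ← two_mul, Nat.two_mul_div_two_of_even hev, natCast_self]

theorem exists_add_natCast_eq_zero_or_half [NeZero n] (hev : Even n) (a : ZMod n) :
    ∃ k : ℕ, 1 ≤ k ∧ k ≤ n / 2 ∧ (a + k = 0 ∨ a + k = ((n / 2 : ℕ) : ZMod n)) := by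
  have ha : (a.val : ZMod n) = a := natCast_zmod_val a
  have hlt : a.val < n := val_lt a
  have hn : n = 2 * (n / 2) := (Nat.two_mul_div_two_of_even hev).symm
  rcases Nat.lt_or_ge a.val (n / 2) with h | h
  · refine ⟨n / 2 - a.val, by omega, by omega, Or.inr ?_⟩
    rw [Nat.cast_sub h.le, ha, add_sub_cancel]
  · refine ⟨n - a.val, by omega, by omega, Or.inl ?_⟩
    rw [Nat.cast_sub hlt.le, natCast_self, ha, add_sub_cancel]

theorem eq_of_natCast_sub_eq_zero_or_half {k l : ℕ} (hk : 1 ≤ k) (hkn : k ≤ n / 2)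
    (hl : 1 ≤ l) (hln : l ≤ n / 2)
    (h : (k : ZMod n) - l = 0 ∨ (k : ZMod n) - l = ((n / 2 : ℕ) : ZMod n)) : k = l := by
  obtain ⟨j, hj, hkl⟩ : ∃ j : ℕ, (j = 0 ∨ j = n / 2) ∧ (k : ZMod n) - l - j = 0 := by
    rcases h with h | h
    · exact ⟨0, Or.inl rfl, by rw [h, Nat.cast_zero, sub_zero]⟩
    · exact ⟨n / 2, Or.inr rfl, by rw [h, sub_self]⟩
  have hdvd := (intCast_zmod_eq_zero_iff_dvd (k - l - j) n).1 (by push_cast; exact hkl)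
  have := Int.eq_zero_of_abs_lt_dvd hdvd (by rw [abs_lt]; omega)
  omega

end ZMod

namespace DihedralGroup

variable {n : ℕ}

def psiLength (n : ℕ) : DihedralGroup n → ℕ
  | r i => if i = 0 then 0 else if i = ((n / 2 : ℕ) : ZMod n) then 1 else 2
  | sr _ => 1

theorem sr_mem_psi (i : ZMod n) : sr i ∈ Psi n := Or.inl ⟨i, rfl⟩

theorem r_mem_psi_iff {i : ZMod n} : r i ∈ Psi n ↔ i = ((n / 2 : ℕ) : ZMod n) := by
  simp [Psi]

theorem dist_one_eq_psiLength (hev : Even n) (g : DihedralGroup n) :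
    (cayley (Psi n)).dist 1 g = psiLength n g := by
  have hsr (i : ZMod n) : (cayley (Psi n)).Adj 1 (sr i) :=
    (cayley_adj_one _).2 ⟨nofun, Or.inl (sr_mem_psi i)⟩
  rcases g with i | i
  · by_cases hi0 : i = 0
    · simp [psiLength, hi0]
    have hne : 1 ≠ r i := by rw [one_def, Ne, r.injEq]; exact Ne.symm hi0
    have hadj : (cayley (Psi n)).Adj 1 (r i) ↔ i = ((n / 2 : ℕ) : ZMod n) := by
      rw [cayley_adj_one, inv_r, r_mem_psi_iff, r_mem_psi_iff, neg_eq_iff_eq_neg,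
        neg_eq_of_add_eq_zero_left (ZMod.half_add_half hev), or_self, and_iff_right hne]
    by_cases hih : i = ((n / 2 : ℕ) : ZMod n)
    · rw [SimpleGraph.dist_eq_one_iff_adj.2 (hadj.2 hih)]
      simp only [psiLength, if_neg hi0, if_pos hih]
    · have hsr_r : (cayley (Psi n)).Adj (sr 0) (r i) :=
        (SimpleGraph.fromRel_adj _ _ _).2
          ⟨nofun, Or.inl (by rw [inv_sr, sr_mul_r, zero_add]; exact sr_mem_psi i)⟩
      rw [SimpleGraph.dist_eq_two_of_adj_of_adj hne (mt hadj.1 hih) (hsr 0) hsr_r]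
      simp [psiLength, hi0, hih]
  · simp [psiLength, SimpleGraph.dist_eq_one_iff_adj.2 (hsr i)]

theorem psiLength_r_le_one_iff {z : ZMod n} :
    psiLength n (r z) ≤ 1 ↔ z = 0 ∨ z = ((n / 2 : ℕ) : ZMod n) := by
  simp only [psiLength]
  split_ifs <;> simp_all

theorem eq_of_psiLength_r_eq {z w : ZMod n} (h : psiLength n (r z) = psiLength n (r w))
    (hz : psiLength n (r z) ≤ 1) : z = w := by
  simp only [psiLength] at h hz
  split_ifs at h hz <;> simp_all

theorem exists_psiLength_r_add_le_one [NeZero n] (hev : Even n) (a : ZMod n) :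
    ∃ k : ℕ, 1 ≤ k ∧ k ≤ n / 2 ∧ psiLength n (r (a + k)) ≤ 1 := by
  simpa only [psiLength_r_le_one_iff] using ZMod.exists_add_natCast_eq_zero_or_half hev a

theorem eq_of_psiLength_r_add_le_one (hev : Even n) {a : ZMod n} {k l : ℕ}
    (hk : 1 ≤ k) (hkn : k ≤ n / 2) (hl : 1 ≤ l) (hln : l ≤ n / 2)
    (hak : psiLength n (r (a + k)) ≤ 1) (hal : psiLength n (r (a + l)) ≤ 1) : k = l := by
  have hh := ZMod.half_add_half hev
  rw [psiLength_r_le_one_iff] at hak hal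
  refine ZMod.eq_of_natCast_sub_eq_zero_or_half hk hkn hl hln ?_
  rcases hak with hak | hak <;> rcases hal with hal | hal
  · exact Or.inl (by linear_combination hak - hal)
  · exact Or.inr (by linear_combination hak - hal - hh)
  · exact Or.inr (by linear_combination hak - hal)
  · exact Or.inl (by linear_combination hak - hal)

theorem dist_r_r (hev : Even n) (a b : ZMod n) :
    (cayley (Psi n)).dist (r a) (r b) = psiLength n (r (-a + b)) := by
  rw [cayley_dist_eq_dist_one, dist_one_eq_psiLength hev, inv_r, r_mul_r]

theorem dist_r_sr (hev : Even n) (a b : ZMod n) : (cayley (Psi n)).dist (r a) (sr b) = 1 := by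
  rw [cayley_dist_eq_dist_one, dist_one_eq_psiLength hev, inv_r, r_mul_sr]
  rfl

theorem dist_sr_r (hev : Even n) (a b : ZMod n) : (cayley (Psi n)).dist (sr a) (r b) = 1 := by
  rw [cayley_dist_eq_dist_one, dist_one_eq_psiLength hev, inv_sr, sr_mul_r]
  rfl

theorem dist_sr_sr (hev : Even n) (a b : ZMod n) :
    (cayley (Psi n)).dist (sr a) (sr b) = psiLength n (r (a - b)) := by
  rw [SimpleGraph.dist_comm, cayley_dist_eq_dist_one, dist_one_eq_psiLength hev, inv_sr,
    sr_mul_sr]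

def resolvingSet (n : ℕ) : Set (DihedralGroup n) :=
  {x | ∃ i : ℕ, 1 ≤ i ∧ i ≤ n / 2 ∧ (x = r 1 ^ i ∨ x = r 1 ^ i * sr 0)}

theorem r_mem_resolvingSet {k : ℕ} (hk : 1 ≤ k) (hkn : k ≤ n / 2) :
    r (k : ZMod n) ∈ resolvingSet n :=
  ⟨k, hk, hkn, Or.inl (r_one_pow k).symm⟩

theorem sr_neg_mem_resolvingSet {k : ℕ} (hk : 1 ≤ k) (hkn : k ≤ n / 2) :
    sr (-(k : ZMod n)) ∈ resolvingSet n :=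
  ⟨k, hk, hkn, Or.inr (by rw [r_one_pow, r_mul_sr, zero_sub])⟩

theorem exists_doublyResolves_r_r (hn : 2 ≤ n) (hev : Even n) {a c : ZMod n} (hac : a ≠ c) :
    ∃ x ∈ resolvingSet n, ∃ y ∈ resolvingSet n,
      (cayley (Psi n)).DoublyResolves x y (r a) (r c) := by
  have : NeZero n := ⟨by omega⟩
  obtain ⟨k, hk, hkn, hak⟩ := exists_psiLength_r_add_le_one hev (-a)
  refine ⟨r k, r_mem_resolvingSet hk hkn, sr (-(1 : ℕ)),
    sr_neg_mem_resolvingSet le_rfl (by omega), ?_⟩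
  have hne : psiLength n (r (-a + k)) ≠ psiLength n (r (-c + k)) := fun h =>
    hac (by simpa using eq_of_psiLength_r_eq h hak)
  simp only [SimpleGraph.DoublyResolves, dist_r_r hev, dist_r_sr hev]
  omega

theorem exists_doublyResolves_sr_sr (hn : 2 ≤ n) (hev : Even n) {a c : ZMod n} (hac : a ≠ c) :
    ∃ x ∈ resolvingSet n, ∃ y ∈ resolvingSet n,
      (cayley (Psi n)).DoublyResolves x y (sr a) (sr c) := by
  have : NeZero n := ⟨by omega⟩
  obtain ⟨k, hk, hkn, hak⟩ := exists_psiLength_r_add_le_one hev a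
  refine ⟨sr (-k), sr_neg_mem_resolvingSet hk hkn, r (1 : ℕ),
    r_mem_resolvingSet le_rfl (by omega), ?_⟩
  have hne : psiLength n (r (a + k)) ≠ psiLength n (r (c + k)) := fun h =>
    hac (by simpa using eq_of_psiLength_r_eq h hak)
  simp only [SimpleGraph.DoublyResolves, dist_sr_sr hev, dist_sr_r hev, sub_neg_eq_add]
  omega

theorem exists_doublyResolves_r_sr (hn : 4 ≤ n) (hev : Even n) (a c : ZMod n) :
    ∃ x ∈ resolvingSet n, ∃ y ∈ resolvingSet n,
      (cayley (Psi n)).DoublyResolves x y (r a) (sr c) := by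
  have : NeZero n := ⟨by omega⟩
  obtain ⟨k, hk, hkn, hak⟩ := exists_psiLength_r_add_le_one hev (-a)
  have hl : 1 ≤ k % 2 + 1 ∧ k % 2 + 1 ≤ n / 2 := by omega
  have hal : ¬psiLength n (r (-a + (k % 2 + 1 : ℕ))) ≤ 1 := fun hal => by
    have := eq_of_psiLength_r_add_le_one hev hk hkn hl.1 hl.2 hak hal
    omega
  refine ⟨r k, r_mem_resolvingSet hk hkn, r (k % 2 + 1 : ℕ), r_mem_resolvingSet hl.1 hl.2, ?_⟩
  simp only [SimpleGraph.DoublyResolves, dist_r_r hev, dist_sr_r hev]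
  omega

end DihedralGroup

theorem cayley_doubly_resolving_set (n : ℕ) (hn : 4 ≤ n) (hev : Even n) :
    IsDoublyResolvingSet (cayley (Psi n))
      {x : DihedralGroup n | ∃ i : ℕ, 1 ≤ i ∧ i ≤ n / 2 ∧
        (x = (DihedralGroup.r 1) ^ i ∨ x = (DihedralGroup.r 1) ^ i * DihedralGroup.sr 0)} := by
  intro u v huv
  rcases u with a | a <;> rcases v with c | c
  · exact DihedralGroup.exists_doublyResolves_r_r (by omega) hev (fun h => huv (h ▸ rfl))
  · exact DihedralGroup.exists_doublyResolves_r_sr hn hev a c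
  · obtain ⟨x, hx, y, hy, h⟩ := DihedralGroup.exists_doublyResolves_r_sr hn hev c a
    exact ⟨x, hx, y, hy, h.symm⟩
  · exact DihedralGroup.exists_doublyResolves_sr_sr (by omega) hev (fun h => huv (h ▸ rfl))
end
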